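/- (Buchberger's criterion) Let S = k[x_0,...,x_n] with a multiplicative monomial order, let f_1,...,f_r be nonzero homogeneous polynomials generating the ideal I, and for i < j let S(f_i,f_j) = b x^B f_i − c x^C f_j where x^A = b x^B in(f_i) = c x^C in(f_j) is the least common multiple of the lead terms. If the remainder of every S-polynomial S(f_i,f_j) on division by the list F = [f_1,...,f_r] is zero, then F is a Gröbner basis for I, i.e., in(f_1),...,in(f_r) generate in(I). -/

import Mathlib

set_option maxHeartbeats 1000000


open MvPolynomial

noncomputable section

/-- The lead (largest) exponent of a polynomial with respect to a linear order on exponents. -/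
def leadExp {k : Type*} [Field k] {n : ℕ} (ord : LinearOrder (Fin (n + 1) →₀ ℕ))
    (f : MvPolynomial (Fin (n + 1)) k) : Fin (n + 1) →₀ ℕ :=
  (@Finset.max _ ord f.support).unbotD 0

/-- The lead coefficient. -/
def leadCoeff {k : Type*} [Field k] {n : ℕ} (ord : LinearOrder (Fin (n + 1) →₀ ℕ))
    (f : MvPolynomial (Fin (n + 1)) k) : k :=
  f.coeff (leadExp ord f)

/-- The lead (initial) term `in(f)` of a polynomial. -/
def leadTerm {k : Type*} [Field k] {n : ℕ} (ord : LinearOrder (Fin (n + 1) →₀ ℕ))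
    (f : MvPolynomial (Fin (n + 1)) k) : MvPolynomial (Fin (n + 1)) k :=
  monomial (leadExp ord f) (leadCoeff ord f)

/-- The initial ideal `in(I)`: the ideal generated by the lead terms of all nonzero
elements of `I`. -/
def initialIdeal {k : Type*} [Field k] {n : ℕ} (ord : LinearOrder (Fin (n + 1) →₀ ℕ))
    (I : Ideal (MvPolynomial (Fin (n + 1)) k)) : Ideal (MvPolynomial (Fin (n + 1)) k) :=
  Ideal.span {g | ∃ f ∈ I, f ≠ 0 ∧ g = leadTerm ord f}

/-- The division remainder, as a relation: `IsRemainder ord f g r` holds exactly when the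
recursively defined remainder of `g` under division by the list `f` equals `r`.
At each step: if some lead term `in(f i)` divides `in(g)` we subtract the corresponding
multiple of `f i` for the least such `i`; otherwise the lead term of `g` is moved to
the remainder. -/
inductive IsRemainder {k : Type*} [Field k] {n : ℕ} (ord : LinearOrder (Fin (n + 1) →₀ ℕ))
    {r : ℕ} (f : Fin r → MvPolynomial (Fin (n + 1)) k) :
    MvPolynomial (Fin (n + 1)) k → MvPolynomial (Fin (n + 1)) k → Prop
  | zero : IsRemainder ord f 0 0
  | reduce (g rem : MvPolynomial (Fin (n + 1)) k) (i : Fin r) (hg : g ≠ 0)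
      (hdvd : leadExp ord (f i) ≤ leadExp ord g)
      (hleast : ∀ j : Fin r, j < i → ¬ leadExp ord (f j) ≤ leadExp ord g)
      (h : IsRemainder ord f
        (g - (monomial (leadExp ord g - leadExp ord (f i))
          (leadCoeff ord g / leadCoeff ord (f i))) * f i) rem) :
      IsRemainder ord f g rem
  | keep (g rem : MvPolynomial (Fin (n + 1)) k) (hg : g ≠ 0)
      (hnd : ∀ j : Fin r, ¬ leadExp ord (f j) ≤ leadExp ord g)
      (h : IsRemainder ord f (g - leadTerm ord g) rem) :
      IsRemainder ord f g (leadTerm ord g + rem)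

/-- The S-polynomial `S(f, g) = (1/lc f) x^{A - exp f} f - (1/lc g) x^{A - exp g} g`,
where `x^A` is the least common multiple of the lead terms of `f` and `g`. -/
def sPoly {k : Type*} [Field k] {n : ℕ} (ord : LinearOrder (Fin (n + 1) →₀ ℕ))
    (f g : MvPolynomial (Fin (n + 1)) k) : MvPolynomial (Fin (n + 1)) k :=
  (monomial ((leadExp ord f ⊔ leadExp ord g) - leadExp ord f) (leadCoeff ord f)⁻¹) * f
    - (monomial ((leadExp ord f ⊔ leadExp ord g) - leadExp ord g) (leadCoeff ord g)⁻¹) * g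

namespace BBaux

section ordapi
variable {M : Type*} (ord : LinearOrder M)

lemma lt_iff {a b : M} : ord.lt a b ↔ ord.le a b ∧ ¬ ord.le b a := ord.lt_iff_le_not_ge a b

lemma le_of_lt {a b : M} (h : ord.lt a b) : ord.le a b := ((lt_iff ord).1 h).1

lemma ne_of_lt {a b : M} (h : ord.lt a b) : a ≠ b := by
  rintro rfl; exact ((lt_iff ord).1 h).2 ((lt_iff ord).1 h).1

lemma lt_of_le_of_ne {a b : M} (h : ord.le a b) (hne : a ≠ b) : ord.lt a b :=
  (lt_iff ord).2 ⟨h, fun h2 => hne (ord.le_antisymm _ _ h h2)⟩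

lemma lt_of_le_of_lt {a b c : M} (h : ord.le a b) (h2 : ord.lt b c) : ord.lt a c := by
  refine lt_of_le_of_ne ord (ord.le_trans _ _ _ h ((lt_iff ord).1 h2).1) ?_
  rintro rfl
  exact ((lt_iff ord).1 h2).2 h

lemma lt_of_lt_of_le {a b c : M} (h : ord.lt a b) (h2 : ord.le b c) : ord.lt a c := by
  refine lt_of_le_of_ne ord (ord.le_trans _ _ _ ((lt_iff ord).1 h).1 h2) ?_
  rintro rfl
  exact ((lt_iff ord).1 h).2 h2

lemma lt_irrefl {a : M} (h : ord.lt a a) : False := ne_of_lt ord h rfl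

lemma not_lt_of_le {a b : M} (h : ord.le a b) (h2 : ord.lt b a) : False :=
  lt_irrefl ord (lt_of_lt_of_le ord h2 h)

end ordapi

section mono
variable {n : ℕ} (ord : LinearOrder (Fin (n + 1) →₀ ℕ))

lemma add_lt_add_right (hmult : ∀ A B C : Fin (n + 1) →₀ ℕ, ord.le A B → ord.le (A + C) (B + C)) {A B C : Fin (n + 1) →₀ ℕ} (h : ord.lt A B) :
    ord.lt (A + C) (B + C) :=
  lt_of_le_of_ne ord (hmult _ _ _ (le_of_lt ord h)) fun hc =>
    ne_of_lt ord h (add_right_cancel hc)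

lemma add_le_add (hmult : ∀ A B C : Fin (n + 1) →₀ ℕ, ord.le A B → ord.le (A + C) (B + C)) {A B C D : Fin (n + 1) →₀ ℕ} (h : ord.le A B) (h2 : ord.le C D) :
    ord.le (A + C) (B + D) := by
  refine ord.le_trans _ _ _ (hmult _ _ _ h) ?_
  have := hmult _ _ B h2
  rwa [add_comm C B, add_comm D B] at this

lemma add_lt_add_of_lt_of_le (hmult : ∀ A B C : Fin (n + 1) →₀ ℕ, ord.le A B → ord.le (A + C) (B + C)) {A B C D : Fin (n + 1) →₀ ℕ} (h : ord.lt A B) (h2 : ord.le C D) :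
    ord.lt (A + C) (B + D) :=
  lt_of_lt_of_le ord (add_lt_add_right ord hmult h) (by
    have := hmult _ _ B h2
    rwa [add_comm C B, add_comm D B] at this)

end mono

section leadapi
variable {k : Type*} [Field k] {n : ℕ} (ord : LinearOrder (Fin (n + 1) →₀ ℕ))

variable {f g p q : MvPolynomial (Fin (n + 1)) k}

lemma support_nonempty (hf : f ≠ 0) : f.support.Nonempty :=
  Finset.nonempty_iff_ne_empty.2 (fun h => hf (MvPolynomial.support_eq_empty.1 h))

lemma leadExp_eq_max' (hf : f ≠ 0) :
    leadExp ord f = @Finset.max' _ ord f.support (support_nonempty hf) := by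
  rw [leadExp, ← @Finset.coe_max' _ ord _ (support_nonempty hf), WithBot.unbotD_coe]

lemma leadExp_mem (hf : f ≠ 0) : leadExp ord f ∈ f.support := by
  rw [leadExp_eq_max' ord hf]; exact @Finset.max'_mem _ ord _ _

lemma le_leadExp {A : Fin (n + 1) →₀ ℕ} (hA : A ∈ f.support) :
    ord.le A (leadExp ord f) := by
  have hf : f ≠ 0 := fun h => by simp [h] at hA
  rw [leadExp_eq_max' ord hf]
  exact @Finset.le_max' _ ord _ _ hA

lemma leadCoeff_ne_zero (hf : f ≠ 0) : leadCoeff ord f ≠ 0 :=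
  MvPolynomial.mem_support_iff.1 (leadExp_mem ord hf)

lemma leadTerm_ne_zero (hf : f ≠ 0) : leadTerm ord f ≠ 0 := by
  rw [leadTerm]
  simpa using leadCoeff_ne_zero ord hf

lemma leadExp_unique {A : Fin (n + 1) →₀ ℕ} (hA : A ∈ f.support)
    (h : ∀ B ∈ f.support, ord.le B A) : leadExp ord f = A := by
  have hf : f ≠ 0 := fun h => by simp [h] at hA
  exact ord.le_antisymm _ _ (h _ (leadExp_mem ord hf)) (le_leadExp ord hA)

lemma lt_leadExp_of_ne {A : Fin (n + 1) →₀ ℕ} (hA : A ∈ f.support)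
    (hne : A ≠ leadExp ord f) : ord.lt A (leadExp ord f) :=
  lt_of_le_of_ne ord (le_leadExp ord hA) hne

lemma coeff_sub_leadTerm (A : Fin (n + 1) →₀ ℕ) :
    (f - leadTerm ord f).coeff A = if A = leadExp ord f then 0 else f.coeff A := by
  rw [MvPolynomial.coeff_sub, leadTerm, MvPolynomial.coeff_monomial]
  split
  · next h => subst h; simp [leadCoeff]
  · next h => rw [if_neg (fun h2 => h h2.symm)]; ring

lemma support_sub_leadTerm_subset :
    (f - leadTerm ord f).support ⊆ f.support \ {leadExp ord f} := by
  intro A hA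
  rw [MvPolynomial.mem_support_iff, coeff_sub_leadTerm] at hA
  split at hA
  · exact absurd rfl hA
  · next h => exact Finset.mem_sdiff.2 ⟨MvPolynomial.mem_support_iff.2 hA, by simpa using h⟩

lemma coeff_mul_lead (hmult : ∀ A B C : Fin (n + 1) →₀ ℕ, ord.le A B → ord.le (A + C) (B + C))
    (hp : p ≠ 0) (hq : q ≠ 0) :
    (p * q).coeff (leadExp ord p + leadExp ord q) = leadCoeff ord p * leadCoeff ord q := by
  classical
  rw [MvPolynomial.coeff_mul]
  rw [Finset.sum_eq_single_of_mem (leadExp ord p, leadExp ord q)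
      (Finset.HasAntidiagonal.mem_antidiagonal.2 rfl)]
  · rfl
  · rintro ⟨A, B⟩ hAB hne
    rw [Finset.HasAntidiagonal.mem_antidiagonal] at hAB
    dsimp only at hAB hne ⊢
    by_cases hA : A ∈ p.support
    case neg =>
      rw [MvPolynomial.notMem_support_iff.1 hA, zero_mul]
    by_cases hB : B ∈ q.support
    case neg =>
      rw [MvPolynomial.notMem_support_iff.1 hB, mul_zero]
    exfalso
    have h1 : ord.le A (leadExp ord p) := le_leadExp ord hA
    have h2 : ord.le B (leadExp ord q) := le_leadExp ord hB
    by_cases hAe : A = leadExp ord p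
    · subst hAe
      have hBq : B = leadExp ord q := add_left_cancel hAB
      exact hne (by rw [hBq])
    · have hlt : ord.lt (A + B) (leadExp ord p + leadExp ord q) :=
        add_lt_add_of_lt_of_le ord hmult (lt_of_le_of_ne ord h1 hAe) h2
      rw [hAB] at hlt
      exact lt_irrefl ord hlt

lemma support_mul_le (hmult : ∀ A B C : Fin (n + 1) →₀ ℕ, ord.le A B → ord.le (A + C) (B + C))
    {A : Fin (n + 1) →₀ ℕ} (hA : A ∈ (p * q).support) :
    ord.le A (leadExp ord p + leadExp ord q) := by
  classical
  obtain ⟨B, hB, C, hC, rfl⟩ := Finset.mem_add.1 (MvPolynomial.support_mul p q hA)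
  exact add_le_add ord hmult (le_leadExp ord hB) (le_leadExp ord hC)

lemma leadExp_mul (hmult : ∀ A B C : Fin (n + 1) →₀ ℕ, ord.le A B → ord.le (A + C) (B + C))
    (hp : p ≠ 0) (hq : q ≠ 0) :
    leadExp ord (p * q) = leadExp ord p + leadExp ord q := by
  refine leadExp_unique ord ?_ (fun B hB => support_mul_le ord hmult hB)
  rw [MvPolynomial.mem_support_iff, coeff_mul_lead ord hmult hp hq]
  exact mul_ne_zero (leadCoeff_ne_zero ord hp) (leadCoeff_ne_zero ord hq)

lemma leadCoeff_mul (hmult : ∀ A B C : Fin (n + 1) →₀ ℕ, ord.le A B → ord.le (A + C) (B + C))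
    (hp : p ≠ 0) (hq : q ≠ 0) :
    leadCoeff ord (p * q) = leadCoeff ord p * leadCoeff ord q := by
  rw [leadCoeff, leadExp_mul ord hmult hp hq, coeff_mul_lead ord hmult hp hq]

lemma leadExp_monomial {E : Fin (n + 1) →₀ ℕ} {c : k} (hc : c ≠ 0) :
    leadExp ord (monomial E c) = E := by
  classical
  refine leadExp_unique ord ?_ ?_
  · rw [MvPolynomial.mem_support_iff, MvPolynomial.coeff_monomial, if_pos rfl]; exact hc
  · intro B hB
    rw [MvPolynomial.support_monomial, if_neg hc, Finset.mem_singleton] at hB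
    subst hB; exact ord.le_refl _

lemma leadCoeff_monomial {E : Fin (n + 1) →₀ ℕ} {c : k} (hc : c ≠ 0) :
    leadCoeff ord (monomial E c) = c := by
  rw [leadCoeff, leadExp_monomial ord hc, MvPolynomial.coeff_monomial, if_pos rfl]

lemma leadExp_monomial_mul (hmult : ∀ A B C : Fin (n + 1) →₀ ℕ, ord.le A B → ord.le (A + C) (B + C))
    {E : Fin (n + 1) →₀ ℕ} {c : k} (hc : c ≠ 0) (hp : p ≠ 0) :
    leadExp ord ((monomial E c) * p) = E + leadExp ord p := by
  rw [leadExp_mul ord hmult (by simpa using hc) hp, leadExp_monomial ord hc]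

lemma leadCoeff_monomial_mul (hmult : ∀ A B C : Fin (n + 1) →₀ ℕ, ord.le A B → ord.le (A + C) (B + C))
    {E : Fin (n + 1) →₀ ℕ} {c : k} (hc : c ≠ 0) (hp : p ≠ 0) :
    leadCoeff ord ((monomial E c) * p) = c * leadCoeff ord p := by
  rw [leadCoeff_mul ord hmult (by simpa using hc) hp, leadCoeff_monomial ord hc]

lemma support_monomial_mul_subset {E : Fin (n + 1) →₀ ℕ} {c : k} {A : Fin (n + 1) →₀ ℕ}
    (hA : A ∈ ((monomial E c) * p).support) : ∃ B ∈ p.support, A = E + B := by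
  classical
  obtain ⟨B, hB, C, hC, rfl⟩ := Finset.mem_add.1 (MvPolynomial.support_mul _ p hA)
  rw [MvPolynomial.support_monomial] at hB
  by_cases hc : c = 0
  · rw [if_pos hc] at hB; exact absurd hB (Finset.notMem_empty _)
  · rw [if_neg hc, Finset.mem_singleton] at hB
    exact ⟨C, hC, by rw [hB]⟩

end leadapi

end BBaux


namespace BBaux
variable {k : Type*} [Field k] {n : ℕ} (ord : LinearOrder (Fin (n + 1) →₀ ℕ))
variable {g p q rem : MvPolynomial (Fin (n + 1)) k}

/-- `p`'s support is dominated (w.r.t. `ord`) by elements of `g`'s support. -/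
def SBdd (g p : MvPolynomial (Fin (n + 1)) k) : Prop :=
  ∀ A ∈ p.support, ∃ B ∈ g.support, ord.le A B

lemma sbdd_zero : SBdd ord g 0 := by intro A hA; simp at hA

lemma sbdd_add (h1 : SBdd ord g p) (h2 : SBdd ord g q) : SBdd ord g (p + q) := by
  intro A hA
  rcases Finset.mem_union.1 (MvPolynomial.support_add hA) with h | h
  · exact h1 A h
  · exact h2 A h

lemma isRemainder_zero_left {r : ℕ} {f : Fin r → MvPolynomial (Fin (n + 1)) k}
    (h : IsRemainder ord f 0 rem) : rem = 0 := by
  cases h with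
  | zero => rfl
  | reduce g rem i hg => exact absurd rfl hg
  | keep g rem hg => exact absurd rfl hg

lemma division (hmult : ∀ A B C : Fin (n + 1) →₀ ℕ, ord.le A B → ord.le (A + C) (B + C))
    {r : ℕ} {f : Fin r → MvPolynomial (Fin (n + 1)) k}
    (h : IsRemainder ord f g rem) :
    ∃ h : Fin r → MvPolynomial (Fin (n + 1)) k,
      g = rem + ∑ i, h i * f i ∧ ∀ i, SBdd ord g (h i * f i) := by
  classical
  induction h with
  | zero => exact ⟨0, by simp, fun i => by simpa using sbdd_zero ord⟩
  | reduce g rem i hg hdvd hleast hsub IH =>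
    obtain ⟨h', hEq, hB⟩ := IH
    set Q : MvPolynomial (Fin (n + 1)) k :=
      (monomial (leadExp ord g - leadExp ord (f i)))
        (leadCoeff ord g / leadCoeff ord (f i)) with hQ
    have hQf : SBdd ord g (Q * f i) := by
      intro A hA
      obtain ⟨B, hBmem, rfl⟩ := support_monomial_mul_subset hA
      refine ⟨leadExp ord g, leadExp_mem ord hg, ?_⟩
      have h1 : ord.le (B + (leadExp ord g - leadExp ord (f i)))
          (leadExp ord (f i) + (leadExp ord g - leadExp ord (f i))) :=
        hmult _ _ _ (le_leadExp ord hBmem)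
      rw [add_comm B, add_comm (leadExp ord (f i))] at h1
      rwa [tsub_add_cancel_of_le hdvd] at h1
    have hsupg' : ∀ B ∈ (g - Q * f i).support, B ∈ g.support ∨ B ∈ (Q * f i).support := by
      intro B hBmem
      have := MvPolynomial.support_sub (Fin (n + 1)) g (Q * f i) hBmem
      exact Finset.mem_union.1 this
    refine ⟨Function.update h' i (h' i + Q), ?_, ?_⟩
    · have hptw : ∀ l, Function.update h' i (h' i + Q) l * f l
          = Function.update (fun l => h' l * f l) i ((h' i + Q) * f i) l := by
        intro l
        by_cases hl : l = i
        · subst hl; rw [Function.update_self, Function.update_self]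
        · rw [Function.update_of_ne hl, Function.update_of_ne hl]
      have hsum : ∑ l, Function.update h' i (h' i + Q) l * f l
          = (∑ l, h' l * f l) + Q * f i := by
        rw [Finset.sum_congr rfl (fun l _ => hptw l),
          Finset.sum_update_of_mem (Finset.mem_univ i), add_mul,
          Finset.sum_eq_sum_sdiff_singleton_add (Finset.mem_univ i) (fun l => h' l * f l)]
        ring
      rw [hsum]
      linear_combination hEq
    · intro l
      have htrans : ∀ pp, SBdd ord (g - Q * f i) pp → SBdd ord g pp := by
        intro pp hpp A hA
        obtain ⟨B, hBmem, hle⟩ := hpp A hA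
        rcases hsupg' B hBmem with h | h
        · exact ⟨B, h, hle⟩
        · obtain ⟨C, hC, hle2⟩ := hQf B h
          exact ⟨C, hC, ord.le_trans _ _ _ hle hle2⟩
      by_cases hl : l = i
      · subst hl
        rw [Function.update_self, add_mul]
        exact sbdd_add ord (htrans _ (hB l)) hQf
      · rw [Function.update_of_ne hl]
        exact htrans _ (hB l)
  | keep g rem hg hnd hsub IH =>
    obtain ⟨h', hEq, hB⟩ := IH
    refine ⟨h', ?_, ?_⟩
    · linear_combination hEq
    · intro l A hA
      obtain ⟨B, hBmem, hle⟩ := hB l A hA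
      have := support_sub_leadTerm_subset ord hBmem
      exact ⟨B, (Finset.mem_sdiff.1 this).1, hle⟩

end BBaux


namespace BBaux
open MvPolynomial
variable {k : Type*} [Field k] {n : ℕ}
variable {g p q : MvPolynomial (Fin (n + 1)) k}

lemma degree_add (A B : Fin (n + 1) →₀ ℕ) : (A + B).degree = A.degree + B.degree := by
  simp [Finsupp.degree_eq_weight_one, map_add]

lemma coeff_ne_zero_degree {e : ℕ} (hf : p.IsHomogeneous e) {C : Fin (n + 1) →₀ ℕ}
    (hC : p.coeff C ≠ 0) : C.degree = e := by
  by_contra hne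
  exact hC (hf.coeff_eq_zero hne)

lemma homogComp_mul {e m : ℕ} (hf : p.IsHomogeneous e) (q : MvPolynomial (Fin (n + 1)) k) :
    homogeneousComponent (m + e) (q * p) = homogeneousComponent m q * p := by
  classical
  ext A
  rw [coeff_homogeneousComponent, MvPolynomial.coeff_mul, MvPolynomial.coeff_mul]
  by_cases hA : A.degree = m + e
  · rw [if_pos hA]
    refine Finset.sum_congr rfl ?_
    rintro ⟨B, C⟩ hBC
    rw [Finset.HasAntidiagonal.mem_antidiagonal] at hBC
    dsimp only
    rw [coeff_homogeneousComponent]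
    by_cases hC : p.coeff C = 0
    · rw [hC, mul_zero, mul_zero]
    · have hCd : C.degree = e := coeff_ne_zero_degree hf hC
      have hBd : B.degree = m := by
        have : B.degree + C.degree = m + e := by rw [← degree_add, hBC, hA]
        omega
      rw [if_pos hBd]
  · rw [if_neg hA]
    refine (Finset.sum_eq_zero ?_).symm
    rintro ⟨B, C⟩ hBC
    rw [Finset.HasAntidiagonal.mem_antidiagonal] at hBC
    dsimp only
    rw [coeff_homogeneousComponent]
    by_cases hC : p.coeff C = 0
    · rw [hC, mul_zero]
    · have hCd : C.degree = e := coeff_ne_zero_degree hf hC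
      have hBd : B.degree ≠ m := by
        intro hB
        exact hA (by rw [← hBC, degree_add, hB, hCd])
      rw [if_neg hBd, zero_mul]

lemma homogComp_mul_of_lt {e m : ℕ} (hf : p.IsHomogeneous e)
    (q : MvPolynomial (Fin (n + 1)) k) (hlt : m < e) :
    homogeneousComponent m (q * p) = 0 := by
  classical
  ext A
  rw [coeff_homogeneousComponent, MvPolynomial.coeff_zero]
  by_cases hA : A.degree = m
  · rw [if_pos hA, MvPolynomial.coeff_mul]
    refine Finset.sum_eq_zero ?_
    rintro ⟨B, C⟩ hBC
    rw [Finset.HasAntidiagonal.mem_antidiagonal] at hBC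
    dsimp only
    by_cases hC : p.coeff C = 0
    · rw [hC, mul_zero]
    · exfalso
      have hCd : C.degree = e := coeff_ne_zero_degree hf hC
      have : B.degree + C.degree = m := by rw [← degree_add, hBC, hA]
      omega
  · rw [if_neg hA]

lemma homogComp_self {d : ℕ} (hg : g.IsHomogeneous d) : homogeneousComponent d g = g := by
  rw [homogeneousComponent_of_mem ((mem_homogeneousSubmodule _ _).2 hg), if_pos rfl]

lemma support_homogComp_subset (m : ℕ) : (homogeneousComponent m p).support ⊆ p.support := by
  intro A hA
  rw [MvPolynomial.mem_support_iff, coeff_homogeneousComponent] at hA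
  rw [MvPolynomial.mem_support_iff]
  intro h
  rw [h] at hA
  simp at hA

lemma degree_of_mem_support_homogComp {m : ℕ} {A : Fin (n + 1) →₀ ℕ}
    (hA : A ∈ (homogeneousComponent m p).support) : A.degree = m := by
  rw [MvPolynomial.mem_support_iff] at hA
  exact coeff_ne_zero_degree (homogeneousComponent_isHomogeneous m p) hA

end BBaux


namespace BBaux
open MvPolynomial
variable {k : Type*} [Field k] {n : ℕ} (ord : LinearOrder (Fin (n + 1) →₀ ℕ))
variable {g p q : MvPolynomial (Fin (n + 1)) k}

/-- strict domination of the support -/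
def SLt (δ : Fin (n + 1) →₀ ℕ) (p : MvPolynomial (Fin (n + 1)) k) : Prop :=
  ∀ A ∈ p.support, ord.lt A δ

lemma slt_add {δ} (h1 : SLt ord δ p) (h2 : SLt ord δ q) : SLt ord δ (p + q) := by
  intro A hA
  rcases Finset.mem_union.1 (MvPolynomial.support_add hA) with h | h
  · exact h1 A h
  · exact h2 A h

lemma slt_sum {ι : Type*} {s : Finset ι} {F : ι → MvPolynomial (Fin (n + 1)) k} {δ}
    (h : ∀ i ∈ s, SLt ord δ (F i)) : SLt ord δ (∑ i ∈ s, F i) := by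
  classical
  induction s using Finset.cons_induction with
  | empty => exact fun A hA => by simp at hA
  | cons a s ha IH =>
    rw [Finset.sum_cons]
    exact slt_add ord (h a (Finset.mem_cons_self a s))
      (IH fun i hi => h i (Finset.mem_cons_of_mem hi))

lemma slt_smul {δ} {c : k} (h : SLt ord δ p) : SLt ord δ (c • p) := by
  intro A hA
  exact h A (MvPolynomial.support_smul hA)

section spoly
variable {r : ℕ} {f : Fin r → MvPolynomial (Fin (n + 1)) k}
variable (hmult : ∀ A B C : Fin (n + 1) →₀ ℕ, ord.le A B → ord.le (A + C) (B + C))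

lemma spoly_support_lt
    (hmult : ∀ A B C : Fin (n + 1) →₀ ℕ, ord.le A B → ord.le (A + C) (B + C))
    {a b : MvPolynomial (Fin (n + 1)) k} (ha : a ≠ 0) (hb : b ≠ 0) :
    SLt ord (leadExp ord a ⊔ leadExp ord b) (sPoly ord a b) := by
  set L := leadExp ord a ⊔ leadExp ord b with hL
  set m1 : MvPolynomial (Fin (n + 1)) k := monomial (L - leadExp ord a) (leadCoeff ord a)⁻¹
  set m2 : MvPolynomial (Fin (n + 1)) k := monomial (L - leadExp ord b) (leadCoeff ord b)⁻¹
  have hbd : ∀ A ∈ (sPoly ord a b).support, ord.le A L := by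
    intro A hA
    rw [sPoly, sub_eq_add_neg] at hA
    rcases Finset.mem_union.1 (MvPolynomial.support_add hA) with h | h
    · obtain ⟨B, hB, rfl⟩ := support_monomial_mul_subset h
      have h1 := hmult _ _ (L - leadExp ord a) (le_leadExp ord hB)
      rw [add_comm B, add_comm (leadExp ord a)] at h1
      rwa [tsub_add_cancel_of_le le_sup_left] at h1
    · rw [MvPolynomial.support_neg] at h
      obtain ⟨B, hB, rfl⟩ := support_monomial_mul_subset h
      have h1 := hmult _ _ (L - leadExp ord b) (le_leadExp ord hB)
      rw [add_comm B, add_comm (leadExp ord b)] at h1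
      rwa [tsub_add_cancel_of_le le_sup_right] at h1
  have hcz : (sPoly ord a b).coeff L = 0 := by
    have hm1 : (m1 * a).coeff L = 1 := by
      have e1 : leadExp ord (m1 * a) = L := by
        rw [leadExp_monomial_mul ord hmult (inv_ne_zero (leadCoeff_ne_zero ord ha)) ha,
          tsub_add_cancel_of_le le_sup_left]
      have := leadCoeff_monomial_mul ord hmult
        (inv_ne_zero (leadCoeff_ne_zero ord ha)) ha (E := L - leadExp ord a)
      rw [leadCoeff, e1] at this
      rw [this, inv_mul_cancel₀ (leadCoeff_ne_zero ord ha)]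
    have hm2 : (m2 * b).coeff L = 1 := by
      have e1 : leadExp ord (m2 * b) = L := by
        rw [leadExp_monomial_mul ord hmult (inv_ne_zero (leadCoeff_ne_zero ord hb)) hb,
          tsub_add_cancel_of_le le_sup_right]
      have := leadCoeff_monomial_mul ord hmult
        (inv_ne_zero (leadCoeff_ne_zero ord hb)) hb (E := L - leadExp ord b)
      rw [leadCoeff, e1] at this
      rw [this, inv_mul_cancel₀ (leadCoeff_ne_zero ord hb)]
    rw [sPoly, MvPolynomial.coeff_sub]
    rw [show ((monomial (L - leadExp ord a)) (leadCoeff ord a)⁻¹ : MvPolynomial (Fin (n+1)) k)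
       = m1 from rfl, show ((monomial (L - leadExp ord b)) (leadCoeff ord b)⁻¹ :
       MvPolynomial (Fin (n+1)) k) = m2 from rfl, hm1, hm2, sub_self]
  intro A hA
  refine lt_of_le_of_ne ord (hbd A hA) ?_
  rintro rfl
  exact (MvPolynomial.mem_support_iff.1 hA) hcz

end spoly
end BBaux


namespace BBaux
open MvPolynomial
variable {k : Type*} [Field k] {n : ℕ} (ord : LinearOrder (Fin (n + 1) →₀ ℕ))

section vrep
variable {r : ℕ} {f : Fin r → MvPolynomial (Fin (n + 1)) k}

/-- Shifted S-polynomial: `x^(δ-L) * S(f a, f b) = v a - v b` where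
`v i = x^(δ - e i) (lc f i)⁻¹ f i`. -/
lemma shifted_spoly_eq {a b : Fin r} (ha : f a ≠ 0) (hb : f b ≠ 0)
    {δ : Fin (n + 1) →₀ ℕ} (hea : leadExp ord (f a) ≤ δ) (heb : leadExp ord (f b) ≤ δ) :
    (monomial (δ - (leadExp ord (f a) ⊔ leadExp ord (f b))) (1 : k)) * sPoly ord (f a) (f b)
      = (monomial (δ - leadExp ord (f a)) (leadCoeff ord (f a))⁻¹) * f a
        - (monomial (δ - leadExp ord (f b)) (leadCoeff ord (f b))⁻¹) * f b := by
  set L := leadExp ord (f a) ⊔ leadExp ord (f b) with hL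
  have hLδ : L ≤ δ := sup_le hea heb
  rw [sPoly, mul_sub, ← mul_assoc, ← mul_assoc, monomial_mul, monomial_mul, one_mul, one_mul,
    tsub_add_tsub_cancel hLδ le_sup_left, tsub_add_tsub_cancel hLδ le_sup_right]

/-- A strictly `δ`-bounded standard representation of `v a - v b` for `a ≠ b` in `T`. -/
lemma pair_rep (hmult : ∀ A B C : Fin (n + 1) →₀ ℕ, ord.le A B → ord.le (A + C) (B + C))
    (hf0 : ∀ i, f i ≠ 0)
    (hrem : ∀ i j : Fin r, i < j → IsRemainder ord f (sPoly ord (f i) (f j)) 0)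
    {a b : Fin r} (hab : a ≠ b)
    {δ : Fin (n + 1) →₀ ℕ} (hea : leadExp ord (f a) ≤ δ) (heb : leadExp ord (f b) ≤ δ) :
    ∃ P : Fin r → MvPolynomial (Fin (n + 1)) k,
      ((monomial (δ - leadExp ord (f a)) (leadCoeff ord (f a))⁻¹) * f a
        - (monomial (δ - leadExp ord (f b)) (leadCoeff ord (f b))⁻¹) * f b)
        = ∑ l, P l * f l ∧ ∀ l, SLt ord δ (P l * f l) := by
  classical
  -- reduce to the ordered case
  suffices H : ∀ a b : Fin r, a < b →
      ∃ P : Fin r → MvPolynomial (Fin (n + 1)) k,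
        leadExp ord (f a) ≤ δ → leadExp ord (f b) ≤ δ →
        ((monomial (δ - leadExp ord (f a)) (leadCoeff ord (f a))⁻¹) * f a
          - (monomial (δ - leadExp ord (f b)) (leadCoeff ord (f b))⁻¹) * f b)
          = ∑ l, P l * f l ∧ ∀ l, SLt ord δ (P l * f l) by
    rcases lt_or_gt_of_ne hab with h | h
    · obtain ⟨P, hP⟩ := H a b h
      exact ⟨P, hP hea heb⟩
    · obtain ⟨P, hP⟩ := H b a h
      obtain ⟨h1, h2⟩ := hP heb hea
      refine ⟨fun l => -P l, ?_, ?_⟩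
      · rw [show ∀ x y : MvPolynomial (Fin (n+1)) k, x - y = -(y - x) from fun x y => by ring,
          h1, ← Finset.sum_neg_distrib]
        exact Finset.sum_congr rfl fun l _ => by ring
      · intro l A hA
        rw [neg_mul, MvPolynomial.support_neg] at hA
        exact h2 l A hA
  intro a b hab'
  by_cases hea' : leadExp ord (f a) ≤ δ
  case neg => exact ⟨0, fun h _ => absurd h hea'⟩
  by_cases heb' : leadExp ord (f b) ≤ δ
  case neg => exact ⟨0, fun _ h => absurd h heb'⟩
  set L := leadExp ord (f a) ⊔ leadExp ord (f b) with hL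
  have hLδ : L ≤ δ := sup_le hea' heb'
  obtain ⟨q, hq, hqB⟩ := division ord hmult (hrem a b hab')
  rw [zero_add] at hq
  refine ⟨fun l => (monomial (δ - L) (1 : k)) * q l, fun _ _ => ⟨?_, ?_⟩⟩
  · rw [← shifted_spoly_eq ord (hf0 a) (hf0 b) hea' heb', hq, Finset.mul_sum]
    exact Finset.sum_congr rfl fun l _ => by ring
  · intro l A hA
    rw [mul_assoc] at hA
    obtain ⟨B, hB, rfl⟩ := support_monomial_mul_subset hA
    obtain ⟨C, hC, hBC⟩ := hqB l B hB
    have hCL : ord.lt C L := spoly_support_lt ord hmult (hf0 a) (hf0 b) C hC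
    have h1 : ord.le (δ - L + B) (δ - L + C) := by
      have := hmult _ _ (δ - L) hBC
      rwa [add_comm B, add_comm C] at this
    have h2 : ord.lt (δ - L + C) δ := by
      have := add_lt_add_right ord hmult (C := δ - L) hCL
      rwa [add_comm C, add_comm L, tsub_add_cancel_of_le hLδ] at this
    exact lt_of_le_of_lt ord h1 h2

end vrep
end BBaux


namespace BBaux
open MvPolynomial
variable {k : Type*} [Field k] {n : ℕ} (ord : LinearOrder (Fin (n + 1) →₀ ℕ))

section descent
variable {r : ℕ} {f : Fin r → MvPolynomial (Fin (n + 1)) k}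

/-- Step 1 of the descent: from a representation bounded by `δ` with
`coeff δ g = 0`, get a representation strictly bounded below `δ`. -/
lemma descent_strict (hmult : ∀ A B C : Fin (n + 1) →₀ ℕ, ord.le A B → ord.le (A + C) (B + C))
    (hf0 : ∀ i, f i ≠ 0)
    (hrem : ∀ i j : Fin r, i < j → IsRemainder ord f (sPoly ord (f i) (f j)) 0)
    {g : MvPolynomial (Fin (n + 1)) k} {δ : Fin (n + 1) →₀ ℕ}
    (h : Fin r → MvPolynomial (Fin (n + 1)) k)
    (heq : g = ∑ i, h i * f i)
    (hbdd : ∀ i, ∀ A ∈ (h i * f i).support, ord.le A δ)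
    (hcz : g.coeff δ = 0) :
    ∃ h' : Fin r → MvPolynomial (Fin (n + 1)) k,
      g = ∑ i, h' i * f i ∧ ∀ i, SLt ord δ (h' i * f i) := by
  classical
  set T : Finset (Fin r) := Finset.univ.filter (fun i => (h i * f i).coeff δ ≠ 0) with hT
  -- facts about members of T
  have hTfacts : ∀ i ∈ T, h i ≠ 0 ∧ leadExp ord (h i * f i) = δ ∧
      leadExp ord (f i) ≤ δ ∧ leadExp ord (h i) = δ - leadExp ord (f i) := by
    intro i hi
    have hne : (h i * f i).coeff δ ≠ 0 := (Finset.mem_filter.1 hi).2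
    have hprod : h i * f i ≠ 0 := fun h0 => hne (by rw [h0]; simp)
    have hhi : h i ≠ 0 := fun h0 => hprod (by rw [h0, zero_mul])
    have hlead : leadExp ord (h i * f i) = δ :=
      leadExp_unique ord (MvPolynomial.mem_support_iff.2 hne) (hbdd i)
    have hsum : leadExp ord (h i) + leadExp ord (f i) = δ := by
      rw [← leadExp_mul ord hmult hhi (hf0 i), hlead]
    have hle : leadExp ord (f i) ≤ δ := by
      rw [← hsum]; exact le_add_self
    have hexp : leadExp ord (h i) = δ - leadExp ord (f i) := by
      rw [← hsum, add_tsub_cancel_right]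
    exact ⟨hhi, hlead, hle, hexp⟩
  -- the coefficients c i sum to zero over T
  set c : Fin r → k := fun i => (h i * f i).coeff δ with hc
  have hcsum : ∑ i ∈ T, c i = 0 := by
    have : g.coeff δ = ∑ i, (h i * f i).coeff δ := by
      rw [heq, MvPolynomial.coeff_sum]
    rw [← Finset.sum_filter_ne_zero] at this
    rw [← hcz, this]
  -- case T empty: the given representation is already strict
  by_cases hTe : T = ∅
  · refine ⟨h, heq, fun i A hA => ?_⟩
    refine lt_of_le_of_ne ord (hbdd i A hA) ?_
    rintro rfl
    have : i ∈ T := Finset.mem_filter.2 ⟨Finset.mem_univ i, MvPolynomial.mem_support_iff.1 hA⟩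
    rw [hTe] at this
    exact absurd this (Finset.notMem_empty i)
  obtain ⟨i0, hi0⟩ := Finset.nonempty_iff_ne_empty.2 hTe
  -- v i
  set v : Fin r → MvPolynomial (Fin (n + 1)) k :=
    fun i => (monomial (δ - leadExp ord (f i)) (leadCoeff ord (f i))⁻¹) * f i with hv
  have hvlt : ∀ i ∈ T, leadTerm ord (h i) * f i = c i • v i := by
    intro i hi
    obtain ⟨hhi, hlead, hle, hexp⟩ := hTfacts i hi
    have hci : c i = leadCoeff ord (h i) * leadCoeff ord (f i) := by
      rw [hc]
      dsimp only
      rw [show (h i * f i).coeff δ = leadCoeff ord (h i * f i) from by rw [leadCoeff, hlead],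
        leadCoeff_mul ord hmult hhi (hf0 i)]
    rw [hv]
    dsimp only
    rw [← smul_mul_assoc, MvPolynomial.smul_monomial, leadTerm, hexp, hci, smul_eq_mul,
      mul_assoc, mul_inv_cancel₀ (leadCoeff_ne_zero ord (hf0 i)), mul_one]
  -- key sum identity
  have hkey : ∑ i ∈ T, leadTerm ord (h i) * f i
      = ∑ i ∈ T.erase i0, c i • (v i - v i0) := by
    have e1 : ∑ i ∈ T, leadTerm ord (h i) * f i = ∑ i ∈ T, c i • v i :=
      Finset.sum_congr rfl hvlt
    have e2 : ∑ i ∈ T, c i • (v i - v i0) = ∑ i ∈ T, c i • v i := by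
      rw [show (∑ i ∈ T, c i • (v i - v i0)) = ∑ i ∈ T, (c i • v i - c i • v i0) from
        Finset.sum_congr rfl fun i _ => smul_sub _ _ _, Finset.sum_sub_distrib,
        ← Finset.sum_smul, hcsum, zero_smul, sub_zero]
    have e3 : ∑ i ∈ T.erase i0, c i • (v i - v i0) = ∑ i ∈ T, c i • (v i - v i0) :=
      Finset.sum_erase T (by rw [sub_self, smul_zero])
    rw [e1, e3, e2]
  -- get pair representations
  have hpair : ∀ i ∈ T.erase i0, ∃ P : Fin r → MvPolynomial (Fin (n + 1)) k,
      v i - v i0 = ∑ l, P l * f l ∧ ∀ l, SLt ord δ (P l * f l) := by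
    intro i hi
    have hiT : i ∈ T := Finset.mem_of_mem_erase hi
    have hine : i ≠ i0 := Finset.ne_of_mem_erase hi
    exact pair_rep ord hmult hf0 hrem hine (hTfacts i hiT).2.2.1 (hTfacts i0 hi0).2.2.1
  choose P hPeq hPlt using hpair
  -- assemble the new representation
  refine ⟨fun l => (if l ∈ T then h l - leadTerm ord (h l) else h l)
      + ∑ i ∈ (T.erase i0).attach, c i.1 • P i.1 i.2 l, ?_, ?_⟩
  · have expand : ∀ l, ((if l ∈ T then h l - leadTerm ord (h l) else h l)
        + ∑ i ∈ (T.erase i0).attach, c i.1 • P i.1 i.2 l) * f l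
        = (h l * f l - (if l ∈ T then leadTerm ord (h l) * f l else 0))
          + ∑ i ∈ (T.erase i0).attach, c i.1 • (P i.1 i.2 l * f l) := by
      intro l
      rw [add_mul, Finset.sum_mul]
      congr 1
      · by_cases hl : l ∈ T
        · rw [if_pos hl, if_pos hl, sub_mul]
        · rw [if_neg hl, if_neg hl, sub_zero]
      · exact Finset.sum_congr rfl fun i _ => smul_mul_assoc _ _ _
    rw [Finset.sum_congr rfl fun l _ => expand l]
    rw [Finset.sum_add_distrib, Finset.sum_sub_distrib]
    rw [Finset.sum_ite_mem Finset.univ T (fun l => leadTerm ord (h l) * f l),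
      Finset.univ_inter]
    rw [Finset.sum_comm]
    have swap : ∀ i ∈ (T.erase i0).attach,
        (∑ l, c i.1 • (P i.1 i.2 l * f l)) = c i.1 • (v i.1 - v i0) := by
      intro i _
      rw [← Finset.smul_sum, ← hPeq i.1 i.2]
    rw [Finset.sum_congr rfl swap]
    rw [← Finset.sum_attach (T.erase i0) (fun i => c i • (v i - v i0)), ← hkey] at *
    rw [heq]
    ring
  · intro l
    dsimp only
    rw [add_mul]
    apply slt_add
    · by_cases hl : l ∈ T
      · rw [if_pos hl]
        obtain ⟨hhl, hlead, hle, hexp⟩ := hTfacts l hl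
        intro A hA
        obtain ⟨B, hB, C, hC, rfl⟩ := Finset.mem_add.1
          (MvPolynomial.support_mul _ _ hA)
        have hBlt : ord.lt B (leadExp ord (h l)) := by
          have := support_sub_leadTerm_subset ord hB
          rw [Finset.mem_sdiff, Finset.mem_singleton] at this
          exact lt_of_le_of_ne ord (le_leadExp ord this.1) this.2
        have := add_lt_add_of_lt_of_le ord hmult hBlt (le_leadExp ord hC)
        rwa [hexp, tsub_add_cancel_of_le hle] at this
      · rw [if_neg hl]
        intro A hA
        refine lt_of_le_of_ne ord (hbdd l A hA) ?_
        rintro rfl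
        exact hl (Finset.mem_filter.2 ⟨Finset.mem_univ l, MvPolynomial.mem_support_iff.1 hA⟩)
    · rw [Finset.sum_mul]
      apply slt_sum
      intro i _
      rw [smul_mul_assoc]
      exact slt_smul ord (hPlt i.1 i.2 l)

end descent
end BBaux


namespace BBaux
open MvPolynomial
variable {k : Type*} [Field k] {n : ℕ} (ord : LinearOrder (Fin (n + 1) →₀ ℕ))

section proj
variable {r : ℕ} {f : Fin r → MvPolynomial (Fin (n + 1)) k}

/-- Project a representation onto the degree-`d` part. -/
lemma project_rep {df : Fin r → ℕ} (hdf : ∀ i, (f i).IsHomogeneous (df i)) (d : ℕ)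
    (h : Fin r → MvPolynomial (Fin (n + 1)) k) :
    ∀ l, (if df l ≤ d then homogeneousComponent (d - df l) (h l) else 0) * f l
      = homogeneousComponent d (h l * f l) := by
  intro l
  by_cases hl : df l ≤ d
  · rw [if_pos hl, ← homogComp_mul (hdf l) (h l), Nat.sub_add_cancel hl]
  · rw [if_neg hl, zero_mul, homogComp_mul_of_lt (hdf l) (h l) (Nat.lt_of_not_le hl)]

/-- One full descent step: strictly decrease the bound `δ`, staying within
degree-`d` bounds. -/
lemma descent_step (hmult : ∀ A B C : Fin (n + 1) →₀ ℕ, ord.le A B → ord.le (A + C) (B + C))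
    (hf0 : ∀ i, f i ≠ 0)
    (hrem : ∀ i j : Fin r, i < j → IsRemainder ord f (sPoly ord (f i) (f j)) 0)
    {df : Fin r → ℕ} (hdf : ∀ i, (f i).IsHomogeneous (df i))
    {d : ℕ} {g : MvPolynomial (Fin (n + 1)) k} (hg : g ≠ 0) (hghom : g.IsHomogeneous d)
    {δ : Fin (n + 1) →₀ ℕ} (h : Fin r → MvPolynomial (Fin (n + 1)) k)
    (heq : g = ∑ i, h i * f i)
    (hbdd : ∀ i, ∀ A ∈ (h i * f i).support, ord.le A δ)
    (hcz : g.coeff δ = 0) :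
    ∃ δ' : Fin (n + 1) →₀ ℕ, ord.lt δ' δ ∧ δ'.degree = d ∧
      ∃ h' : Fin r → MvPolynomial (Fin (n + 1)) k,
        g = ∑ i, h' i * f i ∧ ∀ i, ∀ A ∈ (h' i * f i).support, ord.le A δ' := by
  classical
  obtain ⟨h1, heq1, hlt1⟩ := descent_strict ord hmult hf0 hrem h heq hbdd hcz
  set h2 : Fin r → MvPolynomial (Fin (n + 1)) k :=
    fun l => if df l ≤ d then homogeneousComponent (d - df l) (h1 l) else 0 with hh2
  have hpiece : ∀ l, h2 l * f l = homogeneousComponent d (h1 l * f l) :=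
    project_rep hdf d h1
  have heq2 : g = ∑ i, h2 i * f i := by
    rw [Finset.sum_congr rfl fun l _ => hpiece l, ← map_sum, ← heq1, homogComp_self hghom]
  set B : Finset (Fin (n + 1) →₀ ℕ) :=
    Finset.univ.biUnion (fun l => (h2 l * f l).support) with hB
  have hsuppg : g.support ⊆ B := by
    intro A hA
    have : ∑ i, (h2 i * f i).coeff A ≠ 0 := by
      rw [← MvPolynomial.coeff_sum, ← heq2]
      exact MvPolynomial.mem_support_iff.1 hA
    obtain ⟨i, _, hi⟩ := Finset.exists_ne_zero_of_sum_ne_zero this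
    exact Finset.mem_biUnion.2 ⟨i, Finset.mem_univ i, MvPolynomial.mem_support_iff.2 hi⟩
  have hBne : B.Nonempty := ⟨leadExp ord g, hsuppg (leadExp_mem ord hg)⟩
  set δ' := @Finset.max' _ ord B hBne with hδ'
  have hmemB : ∀ {A}, A ∈ B → ∃ l, A ∈ (h2 l * f l).support := by
    intro A hA
    obtain ⟨l, _, hl⟩ := Finset.mem_biUnion.1 hA
    exact ⟨l, hl⟩
  obtain ⟨l0, hl0⟩ := hmemB (@Finset.max'_mem _ ord B hBne)
  refine ⟨δ', ?_, ?_, h2, heq2, ?_⟩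
  · have := hl0
    rw [hpiece l0] at this
    exact hlt1 l0 δ' (support_homogComp_subset d this)
  · have := hl0
    rw [hpiece l0] at this
    exact degree_of_mem_support_homogComp this
  · intro i A hA
    exact @Finset.le_max' _ ord B A (Finset.mem_biUnion.2 ⟨i, Finset.mem_univ i, hA⟩)

/-- Key lemma: every nonzero homogeneous member of the ideal has its lead exponent
divisible by the lead exponent of some `f i`. -/
lemma key_homog (hmult : ∀ A B C : Fin (n + 1) →₀ ℕ, ord.le A B → ord.le (A + C) (B + C))
    (hf0 : ∀ i, f i ≠ 0)
    (hrem : ∀ i j : Fin r, i < j → IsRemainder ord f (sPoly ord (f i) (f j)) 0)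
    {df : Fin r → ℕ} (hdf : ∀ i, (f i).IsHomogeneous (df i))
    {d : ℕ} {g : MvPolynomial (Fin (n + 1)) k} (hg : g ≠ 0) (hghom : g.IsHomogeneous d)
    (hmem : g ∈ Ideal.span (Set.range f)) :
    ∃ i, leadExp ord (f i) ≤ leadExp ord g := by
  classical
  -- initial representation
  obtain ⟨cf, hcf⟩ := (Submodule.mem_span_range_iff_exists_fun _).1 hmem
  have hcf' : g = ∑ i, cf i * f i := by
    rw [← hcf]; exact Finset.sum_congr rfl fun i _ => (smul_eq_mul _ _).symm
  set h0 : Fin r → MvPolynomial (Fin (n + 1)) k :=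
    fun l => if df l ≤ d then homogeneousComponent (d - df l) (cf l) else 0 with hh0
  have hpiece : ∀ l, h0 l * f l = homogeneousComponent d (cf l * f l) :=
    project_rep hdf d cf
  have heq0 : g = ∑ i, h0 i * f i := by
    rw [Finset.sum_congr rfl fun l _ => hpiece l, ← map_sum, ← hcf', homogComp_self hghom]
  -- the set of admissible bounds
  set Δ : Set (Fin (n + 1) →₀ ℕ) := {δ | δ.degree = d ∧
    ∃ h : Fin r → MvPolynomial (Fin (n + 1)) k,
      g = ∑ i, h i * f i ∧ ∀ i, ∀ A ∈ (h i * f i).support, ord.le A δ} with hΔ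
  have hsupp_of_rep : ∀ (h : Fin r → MvPolynomial (Fin (n + 1)) k),
      g = (∑ i, h i * f i) → ∀ A ∈ g.support, ∃ l, A ∈ (h l * f l).support := by
    intro h heq A hA
    have : ∑ i, (h i * f i).coeff A ≠ 0 := by
      rw [← MvPolynomial.coeff_sum, ← heq]
      exact MvPolynomial.mem_support_iff.1 hA
    obtain ⟨i, _, hi⟩ := Finset.exists_ne_zero_of_sum_ne_zero this
    exact ⟨i, MvPolynomial.mem_support_iff.2 hi⟩
  have hΔne : Δ.Nonempty := by
    set B : Finset (Fin (n + 1) →₀ ℕ) :=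
      Finset.univ.biUnion (fun l => (h0 l * f l).support) with hB
    have hBne : B.Nonempty := by
      obtain ⟨l, hl⟩ := hsupp_of_rep h0 heq0 _ (leadExp_mem ord hg)
      exact ⟨leadExp ord g, Finset.mem_biUnion.2 ⟨l, Finset.mem_univ l, hl⟩⟩
    refine ⟨@Finset.max' _ ord B hBne, ?_, h0, heq0, ?_⟩
    · obtain ⟨l, _, hl⟩ := Finset.mem_biUnion.1 (@Finset.max'_mem _ ord B hBne)
      rw [hpiece l] at hl
      exact degree_of_mem_support_homogComp hl
    · intro i A hA
      exact @Finset.le_max' _ ord B A (Finset.mem_biUnion.2 ⟨i, Finset.mem_univ i, hA⟩)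
  have hΔfin : Δ.Finite := by
    refine Set.Finite.subset (Finsupp.finite_of_degree_le d) ?_
    intro δ hδ
    exact le_of_eq hδ.1
  set Δf := hΔfin.toFinset with hΔf
  have hΔfne : Δf.Nonempty := by
    obtain ⟨δ, hδ⟩ := hΔne
    exact ⟨δ, hΔfin.mem_toFinset.2 hδ⟩
  set δm := @Finset.min' _ ord Δf hΔfne with hδm
  have hδmΔ : δm ∈ Δ := hΔfin.mem_toFinset.1 (@Finset.min'_mem _ ord Δf hΔfne)
  obtain ⟨hδmdeg, h, heq, hbdd⟩ := hδmΔ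
  -- minimality forces coeff δm g ≠ 0
  have hcz : g.coeff δm ≠ 0 := by
    intro hcz
    obtain ⟨δ', hlt, hdeg', h', heq', hbdd'⟩ :=
      descent_step ord hmult hf0 hrem hdf hg hghom h heq hbdd hcz
    have : δ' ∈ Δf := hΔfin.mem_toFinset.2 ⟨hdeg', h', heq', hbdd'⟩
    exact not_lt_of_le ord (@Finset.min'_le _ ord Δf δ' this) hlt
  -- hence δm = leadExp g
  have hδm_le : ord.le δm (leadExp ord g) :=
    le_leadExp ord (MvPolynomial.mem_support_iff.2 hcz)
  have hle_δm : ord.le (leadExp ord g) δm := by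
    obtain ⟨l, hl⟩ := hsupp_of_rep h heq _ (leadExp_mem ord hg)
    exact hbdd l _ hl
  have hδmeq : δm = leadExp ord g := ord.le_antisymm _ _ hδm_le hle_δm
  -- find the witness i
  obtain ⟨l, hl⟩ := hsupp_of_rep h heq _ (MvPolynomial.mem_support_iff.2 hcz)
  have hprod : h l * f l ≠ 0 := fun h0 => by rw [h0] at hl; simp at hl
  have hhl : h l ≠ 0 := fun h0 => hprod (by rw [h0, zero_mul])
  have hlead : leadExp ord (h l * f l) = δm :=
    leadExp_unique ord hl (hbdd l)
  have hsum : leadExp ord (h l) + leadExp ord (f l) = δm := by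
    rw [← leadExp_mul ord hmult hhl (hf0 l), hlead]
  refine ⟨l, ?_⟩
  rw [← hδmeq, ← hsum]
  exact le_add_self

end proj
end BBaux


namespace BBaux
open MvPolynomial
variable {k : Type*} [Field k] {n : ℕ} (ord : LinearOrder (Fin (n + 1) →₀ ℕ))

section final
variable {r : ℕ} {f : Fin r → MvPolynomial (Fin (n + 1)) k}

/-- Key lemma without the homogeneity assumption on `g`. -/
lemma key_general (hmult : ∀ A B C : Fin (n + 1) →₀ ℕ, ord.le A B → ord.le (A + C) (B + C))
    (hf0 : ∀ i, f i ≠ 0)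
    (hrem : ∀ i j : Fin r, i < j → IsRemainder ord f (sPoly ord (f i) (f j)) 0)
    {df : Fin r → ℕ} (hdf : ∀ i, (f i).IsHomogeneous (df i))
    {p : MvPolynomial (Fin (n + 1)) k} (hp : p ≠ 0)
    (hmem : p ∈ Ideal.span (Set.range f)) :
    ∃ i, leadExp ord (f i) ≤ leadExp ord p := by
  classical
  set d := (leadExp ord p).degree with hd
  set pd := homogeneousComponent d p with hpd
  have hcoeff : pd.coeff (leadExp ord p) = p.coeff (leadExp ord p) := by
    rw [hpd, coeff_homogeneousComponent, if_pos rfl]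
  have hpd0 : pd ≠ 0 := by
    intro h0
    have := hcoeff
    rw [h0, MvPolynomial.coeff_zero] at this
    exact leadCoeff_ne_zero ord hp this.symm
  have hlexp : leadExp ord pd = leadExp ord p := by
    refine leadExp_unique ord ?_ ?_
    · rw [MvPolynomial.mem_support_iff, hcoeff]
      exact leadCoeff_ne_zero ord hp
    · intro B hB
      exact le_leadExp ord (support_homogComp_subset d hB)
  have hpdmem : pd ∈ Ideal.span (Set.range f) := by
    obtain ⟨cf, hcf⟩ := (Submodule.mem_span_range_iff_exists_fun _).1 hmem
    have hcf' : p = ∑ i, cf i * f i := by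
      rw [← hcf]; exact Finset.sum_congr rfl fun i _ => (smul_eq_mul _ _).symm
    have : pd = ∑ i, (if df i ≤ d then homogeneousComponent (d - df i) (cf i) else 0) * f i := by
      rw [Finset.sum_congr rfl fun l _ => project_rep hdf d cf l, ← map_sum, ← hcf']
    rw [this]
    exact Ideal.sum_mem _ fun i _ =>
      Ideal.mul_mem_left _ _ (Ideal.subset_span ⟨i, rfl⟩)
  obtain ⟨i, hi⟩ := key_homog ord hmult hf0 hrem hdf hpd0
    (homogeneousComponent_isHomogeneous d p) hpdmem
  rw [hlexp] at hi
  exact ⟨i, hi⟩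

/-- lead term factorization -/
lemma leadTerm_factor {p : MvPolynomial (Fin (n + 1)) k} {i : Fin r} (hfi : f i ≠ 0)
    (hp : p ≠ 0) (hle : leadExp ord (f i) ≤ leadExp ord p) :
    leadTerm ord p = (monomial (leadExp ord p - leadExp ord (f i))
      (leadCoeff ord p * (leadCoeff ord (f i))⁻¹)) * leadTerm ord (f i) := by
  rw [leadTerm, leadTerm, monomial_mul, tsub_add_cancel_of_le hle,
    mul_assoc, inv_mul_cancel₀ (leadCoeff_ne_zero ord hfi), mul_one]

end final
end BBaux


/-- **Buchberger's criterion.** If `f_1, …, f_r` are nonzero homogeneous polynomials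
generating the ideal `I`, and the remainder of every S-polynomial `S(f_i, f_j)` (`i < j`)
on division by the list `F = [f_1, …, f_r]` is zero, then `F` is a Gröbner basis of `I`:
the lead terms `in(f_1), …, in(f_r)` generate `in(I)`. -/
theorem buchberger_criterion {k : Type*} [Field k] {n : ℕ}
    (ord : LinearOrder (Fin (n + 1) →₀ ℕ))
    (hmult : ∀ A B C : Fin (n + 1) →₀ ℕ, ord.le A B → ord.le (A + C) (B + C))
    (r : ℕ) (f : Fin r → MvPolynomial (Fin (n + 1)) k)
    (hf0 : ∀ i, f i ≠ 0)
    (hhom : ∀ i, ∃ d : ℕ, (f i).IsHomogeneous d)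
    (hrem : ∀ i j : Fin r, i < j → IsRemainder ord f (sPoly ord (f i) (f j)) 0) :
    initialIdeal ord (Ideal.span (Set.range f))
      = Ideal.span (Set.range fun i => leadTerm ord (f i)) := by
  classical
  choose df hdf using hhom
  apply le_antisymm
  · rw [initialIdeal]
    refine Ideal.span_le.2 ?_
    rintro x ⟨p, hpI, hp0, rfl⟩
    obtain ⟨i, hi⟩ := BBaux.key_general ord hmult hf0 hrem hdf hp0 hpI
    rw [BBaux.leadTerm_factor ord (hf0 i) hp0 hi]
    exact Ideal.mul_mem_left _ _ (Ideal.subset_span ⟨i, rfl⟩)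
  · refine Ideal.span_le.2 ?_
    rintro x ⟨i, rfl⟩
    exact Ideal.subset_span ⟨f i, Ideal.subset_span ⟨i, rfl⟩, hf0 i, rfl⟩
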